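/- In a directed mixed graph G that is acyclic (all strongly connected components are singletons), a path π is σ-blocked by a set C if and only if it is d-blocked by C or has an endpoint in C; consequently σ-separation of A and B given C (with A, B, C disjoint) coincides with d-separation. -/
import Mathlib


/-- Direction of an edge along a path in a directed mixed graph: forward (`→`),
backward (`←`), or bidirected (`↔`). -/
inductive EdgeDir
  | fwd
  | bwd
  | bi
deriving DecidableEq

/-- A path of length `n` in the directed mixed graph with directed edges `E` and
bidirected edges `B`: vertices `v 0, …, v n` with `dir k` describing the edge between
`v k` and `v (k+1)`. -/
structure MixedPath (V : Type*) (E B : V → V → Prop) (n : ℕ) where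
  v : ℕ → V
  dir : ℕ → EdgeDir
  valid : ∀ k, k < n →
    (dir k = EdgeDir.fwd → E (v k) (v (k + 1))) ∧
    (dir k = EdgeDir.bwd → E (v (k + 1)) (v k)) ∧
    (dir k = EdgeDir.bi → B (v k) (v (k + 1)))

/-- Ancestors of a set `C`: vertices with a directed path into `C`. -/
def ancset {V : Type*} (E : V → V → Prop) (C : Set V) : Set V :=
  {j | ∃ c ∈ C, Relation.ReflTransGen E j c}

/-- Two vertices lie in the same strongly connected component. -/
def sameSC {V : Type*} (E : V → V → Prop) (a b : V) : Prop :=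
  Relation.ReflTransGen E a b ∧ Relation.ReflTransGen E b a

/-- The (interior) vertex `v k` of the path is a collider: both adjacent edges point
into it. -/
def isCollider {V : Type*} {E B : V → V → Prop} {n : ℕ}
    (π : MixedPath V E B n) (k : ℕ) : Prop :=
  π.dir (k - 1) ≠ EdgeDir.bwd ∧ π.dir k ≠ EdgeDir.fwd

/-- The path is d-blocked by `C`: it contains an interior collider not in `an(C)`, or an
interior non-collider in `C`. -/
def dBlocked {V : Type*} {E B : V → V → Prop} {n : ℕ}
    (π : MixedPath V E B n) (C : Set V) : Prop :=
  (∃ k, 1 ≤ k ∧ k < n ∧ isCollider π k ∧ π.v k ∉ ancset E C) ∨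
  (∃ k, 1 ≤ k ∧ k < n ∧ ¬ isCollider π k ∧ π.v k ∈ C)

/-- The path is σ-blocked by `C`: an endpoint lies in `C`, or it contains an interior
collider not in `an(C)`, or an interior non-collider in `C` pointing along the path
toward a neighbor outside its strongly connected component. -/
def sigmaBlocked {V : Type*} {E B : V → V → Prop} {n : ℕ}
    (π : MixedPath V E B n) (C : Set V) : Prop :=
  (π.v 0 ∈ C ∨ π.v n ∈ C) ∨
  (∃ k, 1 ≤ k ∧ k < n ∧ isCollider π k ∧ π.v k ∉ ancset E C) ∨
  (∃ k, 1 ≤ k ∧ k < n ∧ ¬ isCollider π k ∧ π.v k ∈ C ∧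
    ((π.dir (k - 1) = EdgeDir.bwd ∧ ¬ sameSC E (π.v (k - 1)) (π.v k)) ∨
     (π.dir k = EdgeDir.fwd ∧ ¬ sameSC E (π.v (k + 1)) (π.v k))))

/-- d-separation of `A` and `B'` given `C`. -/
def dSeparated {V : Type*} (E B : V → V → Prop) (A B' C : Set V) : Prop :=
  ∀ (n : ℕ) (π : MixedPath V E B n), π.v 0 ∈ A → π.v n ∈ B' → dBlocked π C

/-- σ-separation of `A` and `B'` given `C`. -/
def sigmaSeparated {V : Type*} (E B : V → V → Prop) (A B' C : Set V) : Prop :=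
  ∀ (n : ℕ) (π : MixedPath V E B n), π.v 0 ∈ A → π.v n ∈ B' → sigmaBlocked π C

/-- In an acyclic directed mixed graph (all strongly connected components singletons, no
self-loops), a path is σ-blocked by `C` iff it is d-blocked by `C` or has an endpoint in
`C`; consequently σ-separation coincides with d-separation for disjoint `A, B, C`. -/
theorem stmt_15 {V : Type*} (E B : V → V → Prop)
    (hirr : ∀ i, ¬ E i i)
    (hacyc : ∀ i j, sameSC E i j → i = j) :
    (∀ (n : ℕ) (π : MixedPath V E B n) (C : Set V),
        sigmaBlocked π C ↔ (dBlocked π C ∨ π.v 0 ∈ C ∨ π.v n ∈ C)) ∧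
    (∀ A B' C : Set V, Disjoint A B' → Disjoint A C → Disjoint B' C →
        (sigmaSeparated E B A B' C ↔ dSeparated E B A B' C)) := by
  have main : ∀ (n : ℕ) (π : MixedPath V E B n) (C : Set V),
      sigmaBlocked π C ↔ (dBlocked π C ∨ π.v 0 ∈ C ∨ π.v n ∈ C) := by
    intro n π C
    constructor
    · rintro (h | h | ⟨k, hk1, hkn, hnc, hC, _⟩)
      · exact Or.inr h
      · exact Or.inl (Or.inl h)
      · exact Or.inl (Or.inr ⟨k, hk1, hkn, hnc, hC⟩)
    · rintro (h | h)
      · rcases h with h | ⟨k, hk1, hkn, hnc, hC⟩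
        · exact Or.inr (Or.inl h)
        · refine Or.inr (Or.inr ⟨k, hk1, hkn, hnc, hC, ?_⟩)
          by_cases hb : π.dir (k - 1) = EdgeDir.bwd
          · left
            refine ⟨hb, fun hsc => ?_⟩
            have heq := hacyc _ _ hsc
            have hE : E (π.v k) (π.v (k - 1)) := by
              have := (π.valid (k - 1) (by omega)).2.1 hb
              rwa [Nat.sub_add_cancel hk1] at this
            rw [heq] at hE
            exact hirr _ hE
          · have hf : π.dir k = EdgeDir.fwd := by
              by_contra hf
              exact hnc ⟨hb, hf⟩
            right
            refine ⟨hf, fun hsc => ?_⟩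
            have heq := hacyc _ _ hsc
            have hE : E (π.v k) (π.v (k + 1)) := (π.valid k hkn).1 hf
            rw [heq] at hE
            exact hirr _ hE
      · exact Or.inl h
  refine ⟨main, fun A B' C hAB hAC hBC => ?_⟩
  constructor
  · intro h n π h0 hn
    rcases (main n π C).1 (h n π h0 hn) with hd | hc
    · exact hd
    · exfalso
      rcases hc with hc | hc
      · exact hAC.ne_of_mem h0 hc rfl
      · exact hBC.ne_of_mem hn hc rfl
  · intro h n π h0 hn
    exact (main n π C).2 (Or.inl (h n π h0 hn))
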